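/- For every fixed t > 0 and x ∈ ℝ^d, the diffusion potential G_T^t(x) := −T log ( ∫_{ℝ^d} exp( (−G(y) − (1/(2t))‖x−y‖²)/T ) dy ) converges to the Moreau envelope M_G^t(x) as T → 0⁺. -/

import Mathlib

open Set Filter MeasureTheory Real

/-- The Moreau envelope `M_G^t(x) = inf_y G(y) + ‖x - y‖² / (2t)`. -/
noncomputable def moreauEnv {d : ℕ} (G : EuclideanSpace ℝ (Fin d) → ℝ) (t : ℝ)
    (x : EuclideanSpace ℝ (Fin d)) : ℝ :=
  ⨅ y : EuclideanSpace ℝ (Fin d), (G y + ‖x - y‖ ^ 2 / (2 * t))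

/-- The diffusion potential
`G_T^t(x) := -T log (∫ exp((-G(y) - ‖x - y‖²/(2t)) / T) dy)`. -/
noncomputable def diffPot {d : ℕ} (G : EuclideanSpace ℝ (Fin d) → ℝ) (t T : ℝ)
    (x : EuclideanSpace ℝ (Fin d)) : ℝ :=
  -T * Real.log (∫ y : EuclideanSpace ℝ (Fin d),
    Real.exp ((-G y - ‖x - y‖ ^ 2 / (2 * t)) / T))

/-- for every fixed `t > 0` and `x`, the diffusion potential `G_T^t(x)`
converges to the Moreau envelope `M_G^t(x)` as `T → 0⁺`. -/
theorem diffPot_tendsto_moreauEnv {d : ℕ}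
    (G : EuclideanSpace ℝ (Fin d) → ℝ)
    (hGcont : Continuous G)
    (hGcoercive : ∀ r : ℝ, ∃ R : ℝ, ∀ y : EuclideanSpace ℝ (Fin d), R ≤ ‖y‖ → r ≤ G y)
    (hGbddBelow : ∃ m : ℝ, ∀ y : EuclideanSpace ℝ (Fin d), m ≤ G y)
    (hInt : ∀ (x : EuclideanSpace ℝ (Fin d)) (t : ℝ), 0 < t →
      Integrable (fun y : EuclideanSpace ℝ (Fin d) =>
        Real.exp (-G y - ‖x - y‖ ^ 2 / (2 * t)))) :
    ∀ (t : ℝ), 0 < t → ∀ x : EuclideanSpace ℝ (Fin d),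
      Tendsto (fun T => diffPot G t T x) (nhdsWithin 0 (Set.Ioi 0))
        (nhds (moreauEnv G t x)) := by
  intro t ht x
  obtain ⟨m, hm⟩ := hGbddBelow
  set F : EuclideanSpace ℝ (Fin d) → ℝ := fun y => G y + ‖x - y‖ ^ 2 / (2 * t) with hFdef
  have hFcont : Continuous F := by
    apply hGcont.add
    exact ((continuous_const.sub continuous_id).norm.pow 2).div_const _
  have hFcoer : Tendsto F (cocompact _) atTop := by
    rw [tendsto_atTop]
    intro r
    set r' : ℝ := max r m with hr'
    have h1 : ∀ᶠ y : EuclideanSpace ℝ (Fin d) in cocompact _,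
        ‖x‖ + Real.sqrt ((r' - m) * (2 * t)) ≤ ‖y‖ :=
      tendsto_norm_cocompact_atTop.eventually (eventually_ge_atTop _)
    filter_upwards [h1] with y hy
    have hs : 0 ≤ (r' - m) * (2 * t) := by
      have : m ≤ r' := le_max_right _ _
      nlinarith
    have hxy : Real.sqrt ((r' - m) * (2 * t)) ≤ ‖x - y‖ := by
      have h2 : ‖y‖ - ‖x‖ ≤ ‖y - x‖ := norm_sub_norm_le y x
      rw [norm_sub_rev] at h2
      linarith
    have hsq : (r' - m) * (2 * t) ≤ ‖x - y‖ ^ 2 := by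
      have := Real.sq_sqrt hs
      nlinarith [Real.sqrt_nonneg ((r' - m) * (2 * t)), norm_nonneg (x - y)]
    have hdiv : r' - m ≤ ‖x - y‖ ^ 2 / (2 * t) := by
      rw [le_div_iff₀ (by positivity)]
      linarith
    have : r' ≤ F y := by
      have := hm y
      simp only [hFdef]
      linarith
    exact le_trans (le_max_left r m) this
  obtain ⟨y₀, hy₀⟩ := hFcont.exists_forall_le hFcoer
  set M : ℝ := moreauEnv G t x with hMdef
  have hMF : M = ⨅ y, F y := rfl
  have hBdd : BddBelow (Set.range F) := ⟨F y₀, by rintro a ⟨y, rfl⟩; exact hy₀ y⟩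
  have hMle : ∀ y, M ≤ F y := fun y => hMF ▸ ciInf_le hBdd y
  have hMeq : M = F y₀ := le_antisymm (hMle y₀) (hMF ▸ le_ciInf hy₀)
  -- integrability of exp(-F)
  have hI : Integrable (fun y => Real.exp (-F y)) := by
    have := hInt x t ht
    apply this.congr
    filter_upwards with y
    congr 1
    simp only [hFdef]
    ring
  -- integrability of exp (-(F y - M)/T) for 0 < T ≤ 1, and bounds
  have hmeas : ∀ T : ℝ, AEStronglyMeasurable
      (fun y : EuclideanSpace ℝ (Fin d) => Real.exp (-(F y - M) / T)) volume := by
    intro T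
    exact (Real.continuous_exp.comp (((hFcont.sub continuous_const).neg).div_const T)).aestronglyMeasurable
  have hJint : ∀ T : ℝ, 0 < T → T ≤ 1 →
      Integrable (fun y => Real.exp (-(F y - M) / T)) := by
    intro T hT hT1
    apply Integrable.mono' (hI.const_mul (Real.exp M)) (hmeas T)
    filter_upwards with y
    rw [Real.norm_eq_abs, abs_of_pos (Real.exp_pos _), ← Real.exp_add]
    apply Real.exp_le_exp.2
    have hFM : 0 ≤ F y - M := sub_nonneg.2 (hMle y)
    have : F y - M ≤ (F y - M) / T := by
      rw [le_div_iff₀ hT]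
      nlinarith
    have : -((F y - M) / T) ≤ -(F y - M) := by linarith
    rw [neg_div] at *
    linarith
  have hCint : Integrable (fun y => Real.exp (-(F y - M))) := by
    apply (hI.const_mul (Real.exp M)).congr
    filter_upwards with y
    rw [← Real.exp_add]
    congr 1
    ring
  set C : ℝ := ∫ y, Real.exp (-(F y - M)) with hCdef
  have hCpos : 0 < C := integral_exp_pos hCint
  -- key identity and bounds for each small T
  have key : ∀ T : ℝ, 0 < T → T ≤ 1 →
      diffPot G t T x = M - T * Real.log (∫ y, Real.exp (-(F y - M) / T)) ∧
      (∫ y, Real.exp (-(F y - M) / T)) ≤ C ∧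
      0 < ∫ y, Real.exp (-(F y - M) / T) := by
    intro T hT hT1
    have hJ := hJint T hT hT1
    have hJpos : 0 < ∫ y, Real.exp (-(F y - M) / T) := by
      have : (fun y : EuclideanSpace ℝ (Fin d) => Real.exp (-(F y - M) / T))
          = fun y => Real.exp (-(F y - M) / T) := rfl
      exact integral_exp_pos hJ
    refine ⟨?_, ?_, hJpos⟩
    · -- identity
      have hrw : (fun y : EuclideanSpace ℝ (Fin d) =>
          Real.exp ((-G y - ‖x - y‖ ^ 2 / (2 * t)) / T))
          = fun y => Real.exp (-M / T) * Real.exp (-(F y - M) / T) := by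
        funext y
        rw [← Real.exp_add, ← add_div]
        congr 1
        simp only [hFdef]
        ring
      rw [diffPot, hrw, integral_const_mul,
        Real.log_mul (Real.exp_ne_zero _) hJpos.ne', Real.log_exp]
      field_simp
      ring
    · -- upper bound by C
      apply integral_mono hJ hCint
      intro y
      apply Real.exp_le_exp.2
      have hFM : 0 ≤ F y - M := sub_nonneg.2 (hMle y)
      have : F y - M ≤ (F y - M) / T := by
        rw [le_div_iff₀ hT]
        nlinarith
      rw [neg_div]
      linarith
  -- the ε-δ argument
  rw [Metric.tendsto_nhdsWithin_nhds]
  intro ε hε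
  -- continuity ball around y₀
  obtain ⟨δb, hδb, hball⟩ : ∃ δb > 0, ∀ y, dist y y₀ < δb → F y < M + ε / 4 := by
    obtain ⟨δb, hδb, h⟩ := Metric.continuousAt_iff.1 hFcont.continuousAt (ε / 4) (by linarith)
    refine ⟨δb, hδb, fun y hy => ?_⟩
    have h1 := h hy
    rw [Real.dist_eq] at h1
    have h2 := abs_lt.1 h1
    rw [hMeq]
    linarith [h2.2]
  set v : ℝ := (volume (Metric.ball y₀ δb)).toReal with hvdef
  have hvpos : 0 < v := by
    rw [hvdef]
    apply ENNReal.toReal_pos (Metric.measure_ball_pos volume y₀ hδb).ne'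
      measure_ball_lt_top.ne
  set A : ℝ := |Real.log C| + 1 with hA
  set B : ℝ := |Real.log v| + 1 with hB
  have hA0 : 0 < A := by positivity
  have hB0 : 0 < B := by positivity
  refine ⟨min 1 (min (ε / A) (ε / (2 * B))), by positivity, ?_⟩
  intro T hTmem hTd
  have hT : 0 < T := hTmem
  rw [Real.dist_eq, sub_zero, abs_of_pos hT] at hTd
  have hT1 : T ≤ 1 := le_of_lt (lt_of_lt_of_le hTd (min_le_left _ _))
  have hTA : T < ε / A := lt_of_lt_of_le hTd (le_trans (min_le_right _ _) (min_le_left _ _))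
  have hTB : T < ε / (2 * B) := lt_of_lt_of_le hTd (le_trans (min_le_right _ _) (min_le_right _ _))
  obtain ⟨hid, hJC, hJpos⟩ := key T hT hT1
  set J : ℝ := ∫ y, Real.exp (-(F y - M) / T) with hJdef
  -- lower bound on J via the ball
  have hJlow : Real.exp (-(ε / 4) / T) * v ≤ J := by
    have hgint : Integrable ((Metric.ball y₀ δb).indicator
        (fun _ => Real.exp (-(ε / 4) / T))) :=
      (IntegrableOn.integrable_indicator
        (integrableOn_const measure_ball_lt_top.ne) measurableSet_ball)
    have hgval : ∫ y, (Metric.ball y₀ δb).indicator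
        (fun _ => Real.exp (-(ε / 4) / T)) y
        = Real.exp (-(ε / 4) / T) * v := by
      rw [integral_indicator_const _ measurableSet_ball, smul_eq_mul, mul_comm]; rfl
    rw [← hgval]
    apply integral_mono hgint (hJint T hT hT1)
    intro y
    by_cases hy : y ∈ Metric.ball y₀ δb
    · rw [Set.indicator_of_mem hy]
      apply Real.exp_le_exp.2
      have hF4 : F y - M < ε / 4 := by
        have := hball y (Metric.mem_ball.1 hy)
        linarith
      rw [neg_div, neg_div, neg_le_neg_iff]
      exact div_le_div_of_nonneg_right hF4.le hT.le
    · rw [Set.indicator_of_notMem hy]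
      exact (Real.exp_pos _).le
  -- conclude
  rw [Real.dist_eq, hid]
  have hlogJC : Real.log J ≤ Real.log C := Real.log_le_log hJpos hJC
  have hlogJlow : -(ε / 4) / T + Real.log v ≤ Real.log J := by
    have h1 : Real.log (Real.exp (-(ε / 4) / T) * v) ≤ Real.log J :=
      Real.log_le_log (by positivity) hJlow
    rwa [Real.log_mul (Real.exp_ne_zero _) hvpos.ne', Real.log_exp] at h1
  have habsC : Real.log C ≤ A := by
    rw [hA]; linarith [le_abs_self (Real.log C)]
  have habsC' : -A ≤ Real.log C := by
    rw [hA]; linarith [neg_abs_le (Real.log C)]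
  have habsv : -B ≤ Real.log v := by
    rw [hB]; linarith [neg_abs_le (Real.log v)]
  have hTA' : T * A < ε := (lt_div_iff₀ hA0).1 hTA
  have hTB' : T * B < ε / 2 := by
    have h := (lt_div_iff₀ (by positivity : (0:ℝ) < 2 * B)).1 hTB
    nlinarith
  clear_value J v A B C
  rw [abs_lt]
  constructor
  · -- -ε < M - T log J - M = -T log J
    have h1 : T * Real.log J ≤ T * Real.log C := by
      exact mul_le_mul_of_nonneg_left hlogJC hT.le
    have h2 : T * Real.log C ≤ T * A := mul_le_mul_of_nonneg_left habsC hT.le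
    linarith
  · -- M - T log J - M < ε
    have h1 : T * (-(ε / 4) / T + Real.log v) ≤ T * Real.log J :=
      mul_le_mul_of_nonneg_left hlogJlow hT.le
    have h2 : T * (-(ε / 4) / T + Real.log v) = -(ε / 4) + T * Real.log v := by
      field_simp
    have h3 : -(T * B) ≤ T * Real.log v := by
      have := mul_le_mul_of_nonneg_left habsv hT.le
      linarith
    have h4 : -(ε / 4) + T * Real.log v ≤ T * Real.log J := by rw [← h2]; exact h1
    linarith [h4, h3, hTB', hε]
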